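/- arXiv:2603.26399 — 4 statements merged into one kernel-verified Lean document; each statement's English description precedes it below -/
import Mathlib

section
/- For every integer n ≥ 2 and every integer m ≥ 1, we have (1/n) · Σ_{n ≥ n_1 ≥ n_2 ≥ ⋯ ≥ n_m ≥ 1} 1/(n_1 n_2 ⋯ n_m) < 1, where the sum is over weakly decreasing m-tuples of positive integers bounded above by n. -/
/-!
Write `S(n, m)` for the sum. Splitting off the largest entry `n₁ = k` gives the recursion
`S(n, m + 1) = ∑_{k=1}^{n} S(k, m) / k` with `S(n, 0) = 1`. By induction every summand is at
most `1`, so `S(n, m) ≤ n`; for `n ≥ 2` the summand `k = n` is strictly below `1`, so `S(n, m) < n`.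
-/

open Finset

lemma Fin.antitone_cons {α : Type*} [Preorder α] {n : ℕ} {f : Fin n → α} {a : α} :
    Antitone (Fin.cons a f : Fin (n + 1) → α) ↔ (∀ j, f j ≤ a) ∧ Antitone f := by
  simp only [antitone_iff_forall_lt]
  exact Fin.liftFun_cons (· ≥ ·)

def antitoneTuples (n m : ℕ) : Finset (Fin m → ℕ) :=
  {f ∈ Fintype.piFinset fun _ => Icc 1 n | Antitone f}

lemma mem_antitoneTuples {n m : ℕ} {f : Fin m → ℕ} :
    f ∈ antitoneTuples n m ↔ (∀ i, f i ∈ Icc 1 n) ∧ Antitone f := by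
  rw [antitoneTuples, mem_filter, Fintype.mem_piFinset]

lemma cons_mem_antitoneTuples {n m k : ℕ} {f : Fin m → ℕ} :
    (Fin.cons k f : Fin (m + 1) → ℕ) ∈ antitoneTuples n (m + 1) ↔
      k ∈ Icc 1 n ∧ f ∈ antitoneTuples k m := by
  simp only [mem_antitoneTuples, Fin.forall_fin_succ, Fin.cons_zero, Fin.cons_succ,
    Fin.antitone_cons, mem_Icc]
  constructor
  · rintro ⟨⟨hk, hf⟩, hfk, hanti⟩
    exact ⟨hk, fun i => ⟨(hf i).1, hfk i⟩, hanti⟩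
  · rintro ⟨hk, hf, hanti⟩
    exact ⟨⟨hk, fun i => ⟨(hf i).1, (hf i).2.trans hk.2⟩⟩, fun i => (hf i).2, hanti⟩

noncomputable def antitoneRecipSum (n m : ℕ) : ℝ :=
  ∑ f ∈ antitoneTuples n m, ∏ i, (f i : ℝ)⁻¹

lemma antitoneRecipSum_zero (n : ℕ) : antitoneRecipSum n 0 = 1 := by
  have : antitoneTuples n 0 = {Fin.elim0} := by
    ext f
    simp [mem_antitoneTuples, Subsingleton.elim f Fin.elim0, Subsingleton.antitone]
  simp [antitoneRecipSum, this]

lemma antitoneRecipSum_succ (n m : ℕ) :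
    antitoneRecipSum n (m + 1) = ∑ k ∈ Icc 1 n, (k : ℝ)⁻¹ * antitoneRecipSum k m := by
  simp only [antitoneRecipSum, mul_sum, sum_sigma']
  refine sum_nbij' (fun f => ⟨f 0, Fin.tail f⟩) (fun p => Fin.cons p.1 p.2) ?_ ?_ ?_ ?_ ?_
  · intro f hf
    rw [← Fin.cons_self_tail f, cons_mem_antitoneTuples] at hf
    simpa using hf
  · rintro ⟨k, f⟩ hp
    simpa [cons_mem_antitoneTuples] using hp
  · intro f _
    simp
  · rintro ⟨k, f⟩ _
    simp
  · intro f _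
    simp [Fin.prod_univ_succ, Fin.tail, mul_comm]

lemma antitoneRecipSum_le {n : ℕ} (m : ℕ) (hn : 1 ≤ n) : antitoneRecipSum n m ≤ n := by
  induction m generalizing n with
  | zero => rw [antitoneRecipSum_zero]; exact_mod_cast hn
  | succ m ih =>
    calc antitoneRecipSum n (m + 1) = ∑ k ∈ Icc 1 n, (k : ℝ)⁻¹ * antitoneRecipSum k m :=
          antitoneRecipSum_succ n m
      _ ≤ ∑ k ∈ Icc 1 n, 1 := sum_le_sum fun k hk =>
          (inv_mul_le_one₀ (Nat.cast_pos.2 (mem_Icc.1 hk).1)).2 (ih (mem_Icc.1 hk).1)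
      _ = n := by simp

lemma antitoneRecipSum_lt {n : ℕ} (m : ℕ) (hn : 2 ≤ n) : antitoneRecipSum n m < n := by
  induction m with
  | zero => rw [antitoneRecipSum_zero]; exact_mod_cast hn
  | succ m ih =>
    calc antitoneRecipSum n (m + 1) = ∑ k ∈ Icc 1 n, (k : ℝ)⁻¹ * antitoneRecipSum k m :=
          antitoneRecipSum_succ n m
      _ < ∑ k ∈ Icc 1 n, 1 := by
          refine sum_lt_sum (fun k hk => ?_) ⟨n, mem_Icc.2 ⟨by omega, le_rfl⟩, ?_⟩
          · exact (inv_mul_le_one₀ (Nat.cast_pos.2 (mem_Icc.1 hk).1)).2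
              (antitoneRecipSum_le m (mem_Icc.1 hk).1)
          · exact (inv_mul_lt_one₀ (by positivity)).2 ih
      _ = n := by simp

lemma tsum_eq_antitoneRecipSum (n m : ℕ) :
    ∑' f : {f : Fin m → ℕ // (∀ i, 1 ≤ f i) ∧ (∀ i, f i ≤ n) ∧
        (∀ i j : Fin m, i ≤ j → (f : Fin m → ℕ) j ≤ f i)}, ∏ i, ((f.1 i : ℝ))⁻¹ =
      antitoneRecipSum n m := by
  refine (tsum_congr_subtype (fun f : Fin m → ℕ => ∏ i, (f i : ℝ)⁻¹)
    (Q := (· ∈ antitoneTuples n m)) fun f => ?_).trans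
      (Finset.tsum_subtype (antitoneTuples n m) fun f => ∏ i, (f i : ℝ)⁻¹)
  simp [mem_antitoneTuples, forall_and, Antitone, and_assoc]

theorem stmt0_general (n m : ℕ) (hn : 2 ≤ n) :
    (n : ℝ)⁻¹ *
      ∑' f : {f : Fin m → ℕ // (∀ i, 1 ≤ f i) ∧ (∀ i, f i ≤ n) ∧
          (∀ i j : Fin m, i ≤ j → (f : Fin m → ℕ) j ≤ f i)},
        ∏ i, ((f.1 i : ℝ))⁻¹ < 1 := by
  rw [tsum_eq_antitoneRecipSum, inv_mul_lt_one₀ (by positivity)]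
  exact antitoneRecipSum_lt m hn

/-- for n ≥ 2, m ≥ 1,
(1/n) · Σ_{n ≥ n_1 ≥ ⋯ ≥ n_m ≥ 1} 1/(n_1 ⋯ n_m) < 1. -/
theorem stmt0 (n m : ℕ) (hn : 2 ≤ n) (hm : 1 ≤ m) :
    (n : ℝ)⁻¹ *
      ∑' f : {f : Fin m → ℕ // (∀ i, 1 ≤ f i) ∧ (∀ i, f i ≤ n) ∧
          (∀ i j : Fin m, i ≤ j → (f : Fin m → ℕ) j ≤ f i)},
        ∏ i, ((f.1 i : ℝ))⁻¹ < 1 :=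
  stmt0_general n m hn
end

section
/- For an admissible index (k_1, …, k_r) (with k_1 ≥ 2 and k_i ≥ 1) and any m ≥ 1, the multiple zeta-star value satisfies ζ*(k_1, …, k_{r-1}, k_r + 1, 1, …, 1) < ζ*(k_1, …, k_{r-1}, k_r), where m ones are appended. -/
open scoped BigOperators

/-- The set of weakly decreasing tuples of positive integers of length `r`. -/
def DecTuple (r : ℕ) : Set (Fin r → ℕ) :=
  {f | (∀ i, 1 ≤ f i) ∧ ∀ i j : Fin r, i ≤ j → f j ≤ f i}

/-- The multiple zeta-star value of an index `k`. -/
noncomputable def zetaStar {r : ℕ} (k : Fin r → ℕ) : ℝ :=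
  ∑' f : DecTuple r, ∏ i, (((f : Fin r → ℕ) i : ℝ) ^ (k i))⁻¹

/-!
Split a decreasing `(r+m)`-tuple into its first `r` entries `n` and its tail `a`, a decreasing
`m`-tuple bounded by `n_r`. Summing over the tail first, the term of
`ζ*(k_1, …, k_r + 1, {1}^m)` over `n` becomes the term of `ζ*(k)` times `n_r⁻¹ T_m(n_r)`, where
`T_m(b) = ∑_{b ≥ a_1 ≥ ⋯ ≥ a_m ≥ 1} 1/(a_1⋯a_m)`. Peeling off `a_1` gives
`T_{m+1}(b) = ∑_{c ≤ b} T_m(c)/c`, whence `T_m(b) ≤ b`, strictly when `b ≥ 2`. So the comparison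
holds termwise, strictly at `n = (2, …, 2)`. Convergence of `ζ*(k)` follows from
`∏ n_i^{k_i} ≥ n_1 ∏ n_i ≥ ∏ n_i^{1 + 1/r}`, as `n_1` is the largest entry.
-/

open Finset

noncomputable def zetaStarTerm {r : ℕ} (k f : Fin r → ℕ) : ℝ := ∏ i, ((f i : ℝ) ^ k i)⁻¹

theorem zetaStar_eq_tsum {r : ℕ} (k : Fin r → ℕ) :
    zetaStar k = ∑' f : DecTuple r, zetaStarTerm k f := rfl

theorem mem_decTuple {r : ℕ} {f : Fin r → ℕ} : f ∈ DecTuple r ↔ (∀ i, 1 ≤ f i) ∧ Antitone f :=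
  Iff.rfl

theorem zetaStarTerm_nonneg {r : ℕ} (k f : Fin r → ℕ) : 0 ≤ zetaStarTerm k f :=
  prod_nonneg fun _ _ => by positivity

theorem summable_pi_prod_of_nonneg {ι β : Type*} [Fintype ι] {g : ι → β → ℝ}
    (hg₀ : ∀ i b, 0 ≤ g i b) (hg : ∀ i, Summable (g i)) :
    Summable fun f : ι → β => ∏ i, g i (f i) := by
  classical
  refine summable_of_sum_le (c := ∏ i, ∑' b, g i b) (fun f => prod_nonneg fun i _ => hg₀ i _)
    fun u => ?_
  calc ∑ f ∈ u, ∏ i, g i (f i)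
      ≤ ∑ f ∈ Fintype.piFinset fun i => u.image (· i), ∏ i, g i (f i) :=
        sum_le_sum_of_subset_of_nonneg
          (fun f hf => Fintype.mem_piFinset.2 fun i => mem_image_of_mem _ hf)
          fun f _ _ => prod_nonneg fun i _ => hg₀ i _
    _ = ∏ i, ∑ b ∈ u.image (· i), g i b := (prod_univ_sum _ _).symm
    _ ≤ ∏ i, ∑' b, g i b :=
        prod_le_prod (fun i _ => sum_nonneg fun b _ => hg₀ i b)
          fun i _ => (hg i).sum_le_tsum _ fun b _ => hg₀ i b

theorem prod_rpow_one_add_inv_le_prod_pow {s : ℕ} {k f : Fin (s + 1) → ℕ} (hk₀ : 2 ≤ k 0)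
    (hk : ∀ i, 1 ≤ k i) (hf : f ∈ DecTuple (s + 1)) :
    ∏ i, (f i : ℝ) ^ (1 + ((s + 1 : ℕ) : ℝ)⁻¹) ≤ ∏ i, (f i : ℝ) ^ k i := by
  obtain ⟨hf₁, hf_anti⟩ := mem_decTuple.1 hf
  have one_le : ∀ i, (1 : ℝ) ≤ f i := fun i => by exact_mod_cast hf₁ i
  have pos : ∀ i, (0 : ℝ) < f i := fun i => one_pos.trans_le (one_le i)
  have spread : ∏ i, (f i : ℝ) ^ ((s + 1 : ℕ) : ℝ)⁻¹ ≤ f 0 := calc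
    ∏ i, (f i : ℝ) ^ ((s + 1 : ℕ) : ℝ)⁻¹ ≤ ∏ _i : Fin (s + 1), (f 0 : ℝ) ^ ((s + 1 : ℕ) : ℝ)⁻¹ :=
        prod_le_prod (fun i _ => by positivity) fun i _ =>
          Real.rpow_le_rpow (pos i).le (by exact_mod_cast hf_anti (Fin.zero_le i)) (by positivity)
    _ = f 0 := by
        rw [prod_const, card_univ, Fintype.card_fin, ← Real.rpow_mul_natCast (pos 0).le,
          inv_mul_cancel₀ (by positivity), Real.rpow_one]
  calc ∏ i, (f i : ℝ) ^ (1 + ((s + 1 : ℕ) : ℝ)⁻¹)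
      = (∏ i, (f i : ℝ)) * ∏ i, (f i : ℝ) ^ ((s + 1 : ℕ) : ℝ)⁻¹ := by
        rw [← prod_mul_distrib]
        exact prod_congr rfl fun i _ => by rw [Real.rpow_add (pos i), Real.rpow_one]
    _ ≤ (∏ i, (f i : ℝ)) * f 0 := by gcongr
    _ = ∏ i, (f i : ℝ) ^ (if i = 0 then 2 else 1) := by
        simp [Fin.prod_univ_succ, Fin.succ_ne_zero]; ring
    _ ≤ ∏ i, (f i : ℝ) ^ k i :=
        prod_le_prod (fun i _ => by positivity) fun i _ =>
          pow_le_pow_right₀ (one_le i) (by split_ifs with h <;> [exact h ▸ hk₀; exact hk i])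

theorem summable_zetaStarTerm {s : ℕ} {k : Fin (s + 1) → ℕ} (hk₀ : 2 ≤ k 0) (hk : ∀ i, 1 ≤ k i) :
    Summable fun f : DecTuple (s + 1) => zetaStarTerm k f := by
  have hp : (1 : ℝ) < 1 + ((s + 1 : ℕ) : ℝ)⁻¹ := by simp; positivity
  have bound : ∀ f : DecTuple (s + 1),
      zetaStarTerm k f ≤ ∏ i, (((f : Fin (s + 1) → ℕ) i : ℝ) ^ (1 + ((s + 1 : ℕ) : ℝ)⁻¹))⁻¹ := by
    intro f
    rw [zetaStarTerm, prod_inv_distrib, prod_inv_distrib]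
    exact inv_anti₀ (prod_pos fun i _ => by have := f.2.1 i; positivity)
      (prod_rpow_one_add_inv_le_prod_pow hk₀ hk f.2)
  exact Summable.of_nonneg_of_le (fun f => zetaStarTerm_nonneg k f) bound
    ((summable_pi_prod_of_nonneg (fun _ n => by positivity)
      fun _ => Real.summable_nat_rpow_inv.2 hp).subtype (DecTuple (s + 1)))

def boundedDecTuples (m b : ℕ) : Finset (Fin m → ℕ) :=
  {a ∈ Fintype.piFinset fun _ => Icc 1 b | ∀ i j, i ≤ j → a j ≤ a i}

theorem mem_boundedDecTuples {m b : ℕ} {a : Fin m → ℕ} :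
    a ∈ boundedDecTuples m b ↔ (∀ j, a j ∈ Icc 1 b) ∧ Antitone a := by
  simp [boundedDecTuples, Antitone]

theorem cons_mem_boundedDecTuples {m b c : ℕ} {t : Fin m → ℕ} :
    Fin.cons c t ∈ boundedDecTuples (m + 1) b ↔ c ∈ Icc 1 b ∧ t ∈ boundedDecTuples m c := by
  simp only [mem_boundedDecTuples, Fin.forall_fin_succ, Antitone, Fin.cons_zero, Fin.cons_succ,
    Fin.succ_le_succ_iff, Fin.zero_le, mem_Icc]
  constructor
  · rintro ⟨⟨hc, ht⟩, ⟨-, htc⟩, hanti⟩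
    exact ⟨hc, fun j => ⟨(ht j).1, htc j trivial⟩, fun i j hij => (hanti i).2 j hij⟩
  · rintro ⟨hc, ht, hanti⟩
    exact ⟨⟨hc, fun j => ⟨(ht j).1, (ht j).2.trans hc.2⟩⟩, ⟨fun _ => le_rfl, fun j _ => (ht j).2⟩,
      fun i => ⟨fun h => absurd h (by simp), fun j hij => hanti hij⟩⟩

noncomputable def truncZetaStarOnes (m b : ℕ) : ℝ :=
  ∑ a ∈ boundedDecTuples m b, zetaStarTerm 1 a

theorem truncZetaStarOnes_zero (b : ℕ) : truncZetaStarOnes 0 b = 1 := by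
  simp [truncZetaStarOnes, boundedDecTuples, zetaStarTerm]

theorem truncZetaStarOnes_succ (m b : ℕ) :
    truncZetaStarOnes (m + 1) b = ∑ c ∈ Icc 1 b, (c : ℝ)⁻¹ * truncZetaStarOnes m c := by
  simp_rw [truncZetaStarOnes, mul_sum]
  rw [sum_sigma']
  refine sum_nbij' (fun a => ⟨a 0, Fin.tail a⟩) (fun p => Fin.cons p.1 p.2) ?_ ?_ ?_ ?_ ?_
  · intro a ha
    rw [← Fin.cons_self_tail a, cons_mem_boundedDecTuples] at ha
    exact mem_sigma.2 ha
  · rintro ⟨c, t⟩ h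
    exact cons_mem_boundedDecTuples.2 (mem_sigma.1 h)
  · intro a _
    exact Fin.cons_self_tail a
  · rintro ⟨c, t⟩ _
    simp
  · intro a _
    simp [zetaStarTerm, Fin.prod_univ_succ, Fin.tail, mul_comm]

theorem truncZetaStarOnes_le (m : ℕ) {b : ℕ} (hb : 1 ≤ b) : truncZetaStarOnes m b ≤ b := by
  induction m generalizing b with
  | zero => simpa [truncZetaStarOnes_zero] using hb
  | succ m ih =>
    rw [truncZetaStarOnes_succ]
    calc ∑ c ∈ Icc 1 b, (c : ℝ)⁻¹ * truncZetaStarOnes m c ≤ ∑ _c ∈ Icc 1 b, (1 : ℝ) :=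
          sum_le_sum fun c hc => inv_mul_le_one_of_le₀ (ih (mem_Icc.1 hc).1) c.cast_nonneg
      _ = b := by simp

theorem inv_mul_truncZetaStarOnes_le_one (m : ℕ) {b : ℕ} (hb : 1 ≤ b) :
    (b : ℝ)⁻¹ * truncZetaStarOnes m b ≤ 1 :=
  inv_mul_le_one_of_le₀ (truncZetaStarOnes_le m hb) b.cast_nonneg

theorem truncZetaStarOnes_lt (m : ℕ) {b : ℕ} (hb : 2 ≤ b) : truncZetaStarOnes m b < b := by
  induction m with
  | zero => rw [truncZetaStarOnes_zero]; exact_mod_cast hb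
  | succ m ih =>
    rw [truncZetaStarOnes_succ]
    calc ∑ c ∈ Icc 1 b, (c : ℝ)⁻¹ * truncZetaStarOnes m c < ∑ _c ∈ Icc 1 b, (1 : ℝ) :=
          sum_lt_sum (fun c hc => inv_mul_truncZetaStarOnes_le_one m (mem_Icc.1 hc).1)
            ⟨b, mem_Icc.2 ⟨by omega, le_rfl⟩, (inv_mul_lt_one₀ (by positivity)).2 ih⟩
      _ = b := by simp

theorem append_mem_decTuple {s m : ℕ} {n : Fin (s + 1) → ℕ} {a : Fin m → ℕ} :
    Fin.append n a ∈ DecTuple (s + 1 + m) ↔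
      n ∈ DecTuple (s + 1) ∧ a ∈ boundedDecTuples m (n (Fin.last s)) := by
  simp only [mem_decTuple, mem_boundedDecTuples, mem_Icc]
  constructor
  · rintro ⟨hpos, hanti⟩
    refine ⟨⟨fun i => by simpa using hpos (Fin.castAdd m i), fun i j hij => ?_⟩,
      fun j => ⟨by simpa using hpos (Fin.natAdd _ j), ?_⟩, fun i j hij => ?_⟩
    · simpa using hanti ((Fin.strictMono_castAdd m).monotone hij)
    · have hle : Fin.castAdd m (Fin.last s) ≤ Fin.natAdd _ j := by rw [Fin.le_def]; simp; omega
      simpa using hanti hle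
    · simpa using hanti ((Fin.strictMono_natAdd (s + 1)).monotone hij)
  · rintro ⟨⟨hpos, hanti⟩, ha, ha_anti⟩
    refine ⟨fun i => Fin.addCases (by simpa using hpos) (by simpa using fun j => (ha j).1) i,
      fun i j hij => ?_⟩
    induction i using Fin.addCases with
    | left i =>
      induction j using Fin.addCases with
      | left j => simpa using hanti ((Fin.strictMono_castAdd m).le_iff_le.1 hij)
      | right j => simpa using (ha j).2.trans (hanti (Fin.le_last i))
    | right i =>
      induction j using Fin.addCases with
      | left j => exact absurd hij (by simp [Fin.le_def]; omega)
      | right j => simpa using ha_anti ((Fin.strictMono_natAdd _).le_iff_le.1 hij)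

def decTupleAppendEquiv (s m : ℕ) :
    (Σ n : DecTuple (s + 1), boundedDecTuples m (n.1 (Fin.last s))) ≃ DecTuple (s + 1 + m) where
  toFun p := ⟨Fin.append p.1.1 p.2.1, append_mem_decTuple.2 ⟨p.1.2, p.2.2⟩⟩
  invFun x :=
    have hx := append_mem_decTuple.1 ((Fin.append_castAdd_natAdd (f := x.1)).symm ▸ x.2)
    ⟨⟨_, hx.1⟩, ⟨_, hx.2⟩⟩
  left_inv _ := Sigma.subtype_ext (Subtype.ext (funext (Fin.append_left _ _)))
    (funext (Fin.append_right _ _))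
  right_inv _ := Subtype.ext Fin.append_castAdd_natAdd

theorem zetaStarTerm_append {r m : ℕ} (k n : Fin r → ℕ) (l a : Fin m → ℕ) :
    zetaStarTerm (Fin.append k l) (Fin.append n a) = zetaStarTerm k n * zetaStarTerm l a := by
  simp only [zetaStarTerm, Fin.prod_univ_add, Fin.append_left, Fin.append_right]

theorem zetaStarTerm_add_single {r : ℕ} (k n : Fin r → ℕ) (i : Fin r) :
    zetaStarTerm (k + Pi.single i 1) n = zetaStarTerm k n * (n i : ℝ)⁻¹ := by
  simp only [zetaStarTerm, Pi.add_apply, pow_add, mul_inv, prod_mul_distrib, Pi.single_apply,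
    pow_ite, pow_one, pow_zero, apply_ite Inv.inv, inv_one, prod_ite_eq', mem_univ, if_true]

theorem hasSum_zetaStar_append_ones {s : ℕ} (m : ℕ) {k : Fin (s + 1) → ℕ}
    (hk : Summable fun n : DecTuple (s + 1) => zetaStarTerm k n) :
    HasSum (fun n : DecTuple (s + 1) => zetaStarTerm k n *
        ((n.1 (Fin.last s) : ℝ)⁻¹ * truncZetaStarOnes m (n.1 (Fin.last s))))
      (zetaStar (Fin.append (k + Pi.single (Fin.last s) 1) (1 : Fin m → ℕ))) := by
  set e := decTupleAppendEquiv s m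
  set F := fun p => zetaStarTerm (Fin.append (k + Pi.single (Fin.last s) 1) 1) (e p).1
  have fiber : ∀ n : DecTuple (s + 1), HasSum (fun a => F ⟨n, a⟩) (zetaStarTerm k n *
      ((n.1 (Fin.last s) : ℝ)⁻¹ * truncZetaStarOnes m (n.1 (Fin.last s)))) := by
    intro n
    convert hasSum_fintype _ using 1
    simp only [F, e, decTupleAppendEquiv, Equiv.coe_fn_mk, zetaStarTerm_append,
      zetaStarTerm_add_single, truncZetaStarOnes, mul_sum, mul_assoc]
    exact (sum_coe_sort _ _).symm
  have hF : Summable F := by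
    refine (summable_sigma_of_nonneg fun p => zetaStarTerm_nonneg _ _).2
      ⟨fun n => (fiber n).summable, ?_⟩
    refine (hk.of_nonneg_of_le (fun n => ?_) (fun n => ?_)).congr fun n => (fiber n).tsum_eq.symm
    · exact mul_nonneg (zetaStarTerm_nonneg _ _) (mul_nonneg (by positivity)
        (sum_nonneg fun a _ => zetaStarTerm_nonneg _ _))
    · exact mul_le_of_le_one_right (zetaStarTerm_nonneg _ _)
        (inv_mul_truncZetaStarOnes_le_one m (n.2.1 _))
  rw [zetaStar_eq_tsum, ← e.tsum_eq]
  exact hF.hasSum.sigma fiber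

/-- ζ*(k_1,…,k_{r-1},k_r+1,{1}^m) < ζ*(k_1,…,k_r). -/
theorem stmt1 (r m : ℕ) (hr : 1 ≤ r) (k : Fin r → ℕ)
    (hadm : 2 ≤ k ⟨0, by omega⟩) (hpos : ∀ i, 1 ≤ k i) :
    zetaStar (fun i : Fin (r + m) =>
      if h : (i : ℕ) < r then
        (if (i : ℕ) = r - 1 then k ⟨i, h⟩ + 1 else k ⟨i, h⟩)
      else 1) < zetaStar k := by
  obtain ⟨s, rfl⟩ : ∃ s, r = s + 1 := ⟨r - 1, by omega⟩
  suffices zetaStar (Fin.append (k + Pi.single (Fin.last s) 1) (1 : Fin m → ℕ)) < zetaStar k by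
    convert this using 2
    funext i
    induction i using Fin.addCases with
    | left i => simp [Pi.single_apply, Fin.ext_iff, Fin.is_le, add_ite]
    | right j => simpa using fun h => absurd h (by omega)
  have hk := summable_zetaStarTerm hadm hpos
  have hsum := hasSum_zetaStar_append_ones m hk
  have two_mem : (fun _ => 2) ∈ DecTuple (s + 1) := ⟨fun _ => by norm_num, fun _ _ _ => le_rfl⟩
  rw [← hsum.tsum_eq, zetaStar_eq_tsum]
  refine hsum.summable.tsum_lt_tsum (i := ⟨_, two_mem⟩) (fun n => ?_) ?_ hk
  · exact mul_le_of_le_one_right (zetaStarTerm_nonneg _ _)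
      (inv_mul_truncZetaStarOnes_le_one m (n.2.1 _))
  · refine mul_lt_of_lt_one_right (prod_pos fun i _ => by positivity) ?_
    exact (inv_mul_lt_one₀ (by positivity)).2 (truncZetaStarOnes_lt m le_rfl)
end

section
/- For all integers q ≥ 2, all integers i with 1 ≤ i ≤ q − 1, and all m ≥ 1, we have ∏_{n=2}^{m} (1 − 1/n^q)^{−1} ≤ 2m^{−i}/(m^{−i} + m^{−q}). -/
/-!
Since `n ^ q ≥ n ^ 2`, each factor is at most `(1 - 1 / n ^ 2)⁻¹ = n ^ 2 / ((n - 1) (n + 1))`, and the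
product of these telescopes to `2 m / (m + 1)`. Dividing the right-hand side by `m ^ (-i)` turns it into
`2 / (1 + m ^ (i - q))`, which is at least `2 / (1 + m⁻¹) = 2 m / (m + 1)` because `i < q`.
-/

open Finset

theorem prod_Icc_inv_one_sub_inv_sq (m : ℕ) (hm : 1 ≤ m) :
    ∏ n ∈ Icc 2 m, (1 - ((n : ℝ) ^ 2)⁻¹)⁻¹ = 2 * m / (m + 1) := by
  induction m, hm using Nat.le_induction with
  | base => norm_num
  | succ m hm ih =>
    rw [prod_Icc_succ_top (by omega), ih]
    have hm0 : (0 : ℝ) < m := by exact_mod_cast hm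
    have hfactor : 1 - (((m + 1 : ℕ) : ℝ) ^ 2)⁻¹ = m * (m + 2) / (m + 1) ^ 2 := by
      push_cast
      field_simp
      ring
    rw [hfactor]
    push_cast
    field_simp
    ring

theorem inv_one_sub_inv_pow_le_of_le {x : ℝ} (hx : 1 < x) {k q : ℕ} (hk : k ≠ 0) (hkq : k ≤ q) :
    (1 - (x ^ q)⁻¹)⁻¹ ≤ (1 - (x ^ k)⁻¹)⁻¹ := by
  have hxk : (x ^ k)⁻¹ < 1 := inv_lt_one_of_one_lt₀ (one_lt_pow₀ hx hk)
  have hxq : (x ^ q)⁻¹ ≤ (x ^ k)⁻¹ := inv_anti₀ (by positivity) (pow_le_pow_right₀ hx.le hkq)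
  exact inv_anti₀ (by linarith) (by linarith)

theorem prod_Icc_inv_one_sub_inv_pow_le (q m : ℕ) (hq : 2 ≤ q) (hm : 1 ≤ m) :
    ∏ n ∈ Icc 2 m, (1 - ((n : ℝ) ^ q)⁻¹)⁻¹ ≤ 2 * m / (m + 1) := by
  rw [← prod_Icc_inv_one_sub_inv_sq m hm]
  refine prod_le_prod (fun n hn => ?_) (fun n hn => ?_)
  all_goals have hn : (1 : ℝ) < n := by exact_mod_cast (mem_Icc.mp hn).1
  · have : ((n : ℝ) ^ q)⁻¹ < 1 := inv_lt_one_of_one_lt₀ (one_lt_pow₀ hn (by omega))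
    exact inv_nonneg.mpr (by linarith)
  · exact inv_one_sub_inv_pow_le_of_le hn two_ne_zero hq

theorem two_mul_div_add_one_le_zpow {x : ℝ} (hx : 1 ≤ x) {i q : ℤ} (hiq : i < q) :
    2 * x / (x + 1) ≤ 2 * x ^ (-i) / (x ^ (-i) + x ^ (-q)) := by
  have hx0 : 0 < x := by linarith
  have hxi : 0 < x ^ (-i) := zpow_pos hx0 _
  have hxq : 0 < x ^ (-q) := zpow_pos hx0 _
  have key : x * x ^ (-q) ≤ x ^ (-i) := by
    rw [← zpow_one_add₀ hx0.ne']
    exact zpow_le_zpow_right₀ hx (by omega)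
  rw [div_le_div_iff₀ (by positivity) (by positivity)]
  nlinarith

theorem stmt9_general (q i m : ℕ) (hq : 2 ≤ q) (hiq : i ≤ q - 1) (hm : 1 ≤ m) :
    ∏ n ∈ Finset.Icc 2 m, (1 - ((n : ℝ) ^ q)⁻¹)⁻¹ ≤
      2 * (m : ℝ) ^ (-(i : ℤ)) / ((m : ℝ) ^ (-(i : ℤ)) + (m : ℝ) ^ (-(q : ℤ))) :=
  (prod_Icc_inv_one_sub_inv_pow_le q m hq hm).trans
    (two_mul_div_add_one_le_zpow (by exact_mod_cast hm) (by omega))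

/-- for q ≥ 2, 1 ≤ i ≤ q−1 and m ≥ 1,
∏_{n=2}^m (1 − 1/n^q)⁻¹ ≤ 2 m^{−i} / (m^{−i} + m^{−q}). -/
theorem stmt9 (q i m : ℕ) (hq : 2 ≤ q) (hi : 1 ≤ i) (hiq : i ≤ q - 1) (hm : 1 ≤ m) :
    ∏ n ∈ Finset.Icc 2 m, (1 - ((n : ℝ) ^ q)⁻¹)⁻¹ ≤
      2 * (m : ℝ) ^ (-(i : ℤ)) / ((m : ℝ) ^ (-(i : ℤ)) + (m : ℝ) ^ (-(q : ℤ))) :=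
  stmt9_general q i m hq hiq hm
end

section
/- The infinite multiple zeta-star value ζ*(3, {2}^∞) equals 2ζ(2) − 2 = π²/3 − 2. -/
open scoped BigOperators

/-!
Splitting off the largest entry `n₁ = m` gives `ζ*(3, {2}^s) = ∑ₘ m⁻³ ζ*ₘ({2}^s)`, where
`ζ*ₙ(k)` is the truncation of `ζ*(k)` to `n ≥ n₁`. The truncations satisfy
`ζ*ₙ({2}^(s+1)) = ∑_{m ≤ n} m⁻² ζ*ₘ({2}^s)`, a recursion solved exactly by `2n/(n+1)`; both equal
`1` at `n = 1`, so the error `2n/(n+1) - ζ*ₙ({2}^s) ≥ 0` shrinks by the factor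
`∑_{m=2}^n m⁻² ≤ ζ(2) - 1 < 1` at each step. Dominated convergence then gives
`ζ*(3, {2}^∞) = ∑ₘ m⁻³ · 2m/(m+1) = 2ζ(2) - 2`.
-/

open Finset Filter Topology Real

def decTuplesLE (r n : ℕ) : Finset (Fin r → ℕ) :=
  {f ∈ Fintype.piFinset fun _ => Icc 1 n | ∀ i j : Fin r, i ≤ j → f j ≤ f i}

noncomputable def truncZetaStar {r : ℕ} (k : Fin r → ℕ) (n : ℕ) : ℝ :=
  ∑ f ∈ decTuplesLE r n, ∏ i, ((f i : ℝ) ^ k i)⁻¹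

lemma mem_decTuplesLE {r n : ℕ} {f : Fin r → ℕ} :
    f ∈ decTuplesLE r n ↔ f ∈ DecTuple r ∧ ∀ i, f i ≤ n := by
  simp only [decTuplesLE, DecTuple, mem_filter, Fintype.mem_piFinset, mem_Icc, forall_and,
    Set.mem_ofPred_eq]
  tauto

lemma mem_decTuplesLE_succ {r n : ℕ} {f : Fin (r + 1) → ℕ} :
    f ∈ decTuplesLE (r + 1) n ↔ f 0 ∈ Icc 1 n ∧ Fin.tail f ∈ decTuplesLE r (f 0) := by
  simp only [decTuplesLE, mem_filter, Fintype.mem_piFinset, mem_Icc, Fin.forall_fin_succ,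
    Fin.tail, Fin.succ_le_succ_iff]
  constructor
  · rintro ⟨⟨h0, hs⟩, ⟨-, hle⟩, hd⟩
    exact ⟨h0, fun i => ⟨(hs i).1, hle i (Fin.zero_le _)⟩, fun i => (hd i).2⟩
  · rintro ⟨h0, hs, hd⟩
    exact ⟨⟨h0, fun i => ⟨(hs i).1, (hs i).2.trans h0.2⟩⟩, ⟨fun _ => le_rfl, fun i _ => (hs i).2⟩,
      fun i => ⟨fun h => absurd h (not_le.2 i.succ_pos), hd i⟩⟩

lemma truncZetaStar_succ {r : ℕ} (k : Fin (r + 1) → ℕ) (n : ℕ) :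
    truncZetaStar k n = ∑ m ∈ Icc 1 n, ((m : ℝ) ^ k 0)⁻¹ * truncZetaStar (Fin.tail k) m := by
  simp only [truncZetaStar, mul_sum]
  rw [sum_sigma']
  refine sum_nbij' (fun f => ⟨f 0, Fin.tail f⟩) (fun x => Fin.cons x.1 x.2) ?_ ?_ ?_ ?_ ?_
  · intro f hf
    simpa [mem_sigma] using mem_decTuplesLE_succ.1 hf
  · rintro ⟨m, g⟩ h
    rw [mem_decTuplesLE_succ]
    simpa using h
  · intro f _
    exact Fin.cons_self_tail f
  · rintro ⟨m, g⟩ _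
    simp
  · intro f _
    rw [Fin.prod_univ_succ]
    rfl

lemma truncZetaStar_fin_zero (k : Fin 0 → ℕ) (n : ℕ) : truncZetaStar k n = 1 := by
  simp [truncZetaStar, decTuplesLE]

lemma truncZetaStar_one {r : ℕ} (k : Fin r → ℕ) : truncZetaStar k 1 = 1 := by
  induction r with
  | zero => exact truncZetaStar_fin_zero k 1
  | succ r ih => simp [truncZetaStar_succ, ih]

lemma truncZetaStar_nonneg {r : ℕ} (k : Fin r → ℕ) (n : ℕ) : 0 ≤ truncZetaStar k n :=
  sum_nonneg fun _ _ => prod_nonneg fun _ _ => by positivity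

lemma tendsto_truncZetaStar {r : ℕ} (k : Fin r → ℕ) {B : ℝ} (hB : ∀ n, truncZetaStar k n ≤ B) :
    Tendsto (truncZetaStar k) atTop (𝓝 (zetaStar k)) := by
  classical
  let w : DecTuple r → ℝ := fun f => ∏ i, (((f : Fin r → ℕ) i : ℝ) ^ k i)⁻¹
  let U : ℕ → Finset (DecTuple r) := fun n => (decTuplesLE r n).subtype (· ∈ DecTuple r)
  have hU : ∀ n, ∑ f ∈ U n, w f = truncZetaStar k n := fun n =>
    sum_subtype_of_mem (fun f => ∏ i, ((f i : ℝ) ^ k i)⁻¹) fun _ hf => (mem_decTuplesLE.1 hf).1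
  have hUmono : Monotone U := fun n n' hnn' f hf => by
    simp only [U, mem_subtype, mem_decTuplesLE] at hf ⊢
    exact ⟨hf.1, fun i => (hf.2 i).trans hnn'⟩
  have hUtop : Tendsto U atTop atTop := tendsto_atTop_finset_of_monotone hUmono fun f =>
    ⟨univ.sup (f : Fin r → ℕ), by
      simp only [U, mem_subtype, mem_decTuplesLE]
      exact ⟨f.2, fun i => le_sup (mem_univ i)⟩⟩
  have hw : Summable w := by
    refine summable_of_sum_le (c := B) (fun _ => prod_nonneg fun _ _ => by positivity) fun u => ?_
    obtain ⟨n, hn⟩ := (hUtop.eventually (eventually_ge_atTop u)).exists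
    calc ∑ f ∈ u, w f ≤ ∑ f ∈ U n, w f :=
          sum_le_sum_of_subset_of_nonneg hn fun _ _ _ => prod_nonneg fun _ _ => by positivity
      _ ≤ B := (hU n).trans_le (hB n)
  have h := hw.hasSum.comp hUtop
  simp only [Function.comp_def, hU] at h
  exact h

lemma sum_range_succ_eq_sum_Icc_one {g : ℕ → ℝ} (h0 : g 0 = 0) (N : ℕ) :
    ∑ m ∈ range (N + 1), g m = ∑ m ∈ Icc 1 N, g m := by
  rw [Nat.range_succ_eq_Icc_zero, ← insert_Icc_add_one_left_eq_Icc (Nat.zero_le N),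
    sum_insert (by simp), h0, zero_add, zero_add]

lemma hasSum_iff_tendsto_sum_Icc_one {g : ℕ → ℝ} (hg : ∀ m, 0 ≤ g m) (h0 : g 0 = 0) {a : ℝ} :
    HasSum g a ↔ Tendsto (fun N => ∑ m ∈ Icc 1 N, g m) atTop (𝓝 a) := by
  rw [hasSum_iff_tendsto_nat_of_nonneg hg, ← tendsto_add_atTop_iff_nat 1]
  simp only [sum_range_succ_eq_sum_Icc_one h0]

lemma sum_Icc_two_inv_sq_le (n : ℕ) : ∑ m ∈ Icc 2 n, ((m : ℝ) ^ 2)⁻¹ ≤ π ^ 2 / 6 - 1 := by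
  have h := sum_le_hasSum (insert 1 (Icc 2 n)) (fun m _ => by positivity) hasSum_zeta_two
  rw [sum_insert (by simp)] at h
  simp only [one_div, Nat.cast_one, one_pow, inv_one] at h
  linarith

lemma sum_Icc_inv_sq_mul_two_mul_div (n : ℕ) :
    ∑ m ∈ Icc 1 n, ((m : ℝ) ^ 2)⁻¹ * (2 * m / (m + 1)) = 2 * n / (n + 1) := by
  induction n with
  | zero => simp
  | succ n ih =>
    rw [sum_Icc_succ_top (by omega), ih]
    push_cast
    field_simp
    ring

lemma sum_Icc_inv_cube_mul_two_mul_div (n : ℕ) :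
    ∑ m ∈ Icc 1 n, ((m : ℝ) ^ 3)⁻¹ * (2 * m / (m + 1)) =
      2 * ∑ m ∈ Icc 1 n, ((m : ℝ) ^ 2)⁻¹ - 2 * n / (n + 1) := by
  induction n with
  | zero => simp
  | succ n ih =>
    rw [sum_Icc_succ_top (by omega), sum_Icc_succ_top (by omega), ih]
    push_cast
    field_simp
    ring

lemma hasSum_inv_cube_mul_two_mul_div :
    HasSum (fun m : ℕ => ((m : ℝ) ^ 3)⁻¹ * (2 * m / (m + 1))) (π ^ 2 / 3 - 2) := by
  rw [hasSum_iff_tendsto_sum_Icc_one (fun m => by positivity) (by simp)]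
  have hζ : Tendsto (fun N : ℕ => ∑ m ∈ Icc 1 N, ((m : ℝ) ^ 2)⁻¹) atTop (𝓝 (π ^ 2 / 6)) :=
    (hasSum_iff_tendsto_sum_Icc_one (fun m => by positivity) (by simp)).1
      (by simpa only [one_div] using hasSum_zeta_two)
  have hN : Tendsto (fun N : ℕ => 2 * (N : ℝ) / (N + 1)) atTop (𝓝 (2 * 1)) := by
    simpa only [mul_div_assoc] using (tendsto_natCast_div_add_atTop (1 : ℝ)).const_mul 2
  simp only [sum_Icc_inv_cube_mul_two_mul_div]
  convert (hζ.const_mul 2).sub hN using 2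
  ring

lemma zero_le_pi_sq_div_six_sub_one : 0 ≤ π ^ 2 / 6 - 1 := by nlinarith [pi_gt_three]

lemma pi_sq_div_six_sub_one_lt_one : π ^ 2 / 6 - 1 < 1 := by nlinarith [pi_lt_d2, pi_pos]

lemma sub_truncZetaStar_twos_succ (s n : ℕ) :
    2 * n / (n + 1) - truncZetaStar (fun _ : Fin (s + 1) => 2) n =
      ∑ m ∈ Icc 1 n,
        ((m : ℝ) ^ 2)⁻¹ * (2 * m / (m + 1) - truncZetaStar (fun _ : Fin s => 2) m) := by
  rw [truncZetaStar_succ, ← sum_Icc_inv_sq_mul_two_mul_div n, ← sum_sub_distrib]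
  simp only [mul_sub]
  rfl

lemma truncZetaStar_twos_le_and_sub_le (s : ℕ) {n : ℕ} (hn : 1 ≤ n) :
    truncZetaStar (fun _ : Fin s => 2) n ≤ 2 * n / (n + 1) ∧
      2 * n / (n + 1) - truncZetaStar (fun _ : Fin s => 2) n ≤ (π ^ 2 / 6 - 1) ^ s := by
  induction s generalizing n with
  | zero =>
    have hn' : (1 : ℝ) ≤ n := by exact_mod_cast hn
    rw [truncZetaStar_fin_zero, pow_zero, le_div_iff₀ (by positivity), sub_le_iff_le_add,
      div_le_iff₀ (by positivity)]
    constructor <;> linarith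
  | succ s ih =>
    -- the summand `m = 1` vanishes since both the truncation and `2m/(m+1)` equal `1` there
    have hgap : 2 * n / (n + 1) - truncZetaStar (fun _ : Fin (s + 1) => 2) n =
        ∑ m ∈ Icc 2 n,
          ((m : ℝ) ^ 2)⁻¹ * (2 * m / (m + 1) - truncZetaStar (fun _ : Fin s => 2) m) := by
      rw [sub_truncZetaStar_twos_succ, ← insert_Icc_add_one_left_eq_Icc hn, sum_insert (by simp),
        truncZetaStar_one]
      norm_num
    have hterm : ∀ m ∈ Icc 2 n, 0 ≤ 2 * (m : ℝ) / (m + 1) - truncZetaStar (fun _ : Fin s => 2) m ∧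
        2 * (m : ℝ) / (m + 1) - truncZetaStar (fun _ : Fin s => 2) m ≤ (π ^ 2 / 6 - 1) ^ s := by
      intro m hm
      have h := ih (n := m) (by grind)
      exact ⟨sub_nonneg.2 h.1, h.2⟩
    rw [← sub_nonneg, hgap]
    refine ⟨sum_nonneg fun m hm => mul_nonneg (by positivity) (hterm m hm).1, ?_⟩
    calc _ ≤ ∑ m ∈ Icc 2 n, ((m : ℝ) ^ 2)⁻¹ * (π ^ 2 / 6 - 1) ^ s :=
          sum_le_sum fun m hm => mul_le_mul_of_nonneg_left (hterm m hm).2 (by positivity)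
      _ ≤ (π ^ 2 / 6 - 1) * (π ^ 2 / 6 - 1) ^ s := by
          rw [← sum_mul]
          exact mul_le_mul_of_nonneg_right (sum_Icc_two_inv_sq_le n)
            (pow_nonneg zero_le_pi_sq_div_six_sub_one s)
      _ = (π ^ 2 / 6 - 1) ^ (s + 1) := (pow_succ' _ _).symm

lemma tendsto_truncZetaStar_twos {m : ℕ} (hm : 1 ≤ m) :
    Tendsto (fun s => truncZetaStar (fun _ : Fin s => 2) m) atTop (𝓝 (2 * m / (m + 1))) := by
  have hc := tendsto_pow_atTop_nhds_zero_of_lt_one zero_le_pi_sq_div_six_sub_one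
    pi_sq_div_six_sub_one_lt_one
  refine tendsto_iff_norm_sub_tendsto_zero.2
    (squeeze_zero (fun _ => norm_nonneg _) (fun s => ?_) hc)
  obtain ⟨hle, hsub⟩ := truncZetaStar_twos_le_and_sub_le s hm
  rwa [Real.norm_eq_abs, abs_sub_comm, abs_of_nonneg (sub_nonneg.2 hle)]

lemma inv_cube_mul_truncZetaStar_twos_le (s m : ℕ) :
    ((m : ℝ) ^ 3)⁻¹ * truncZetaStar (fun _ : Fin s => 2) m ≤
      ((m : ℝ) ^ 3)⁻¹ * (2 * m / (m + 1)) := by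
  rcases Nat.eq_zero_or_pos m with rfl | hm
  · simp
  · exact mul_le_mul_of_nonneg_left (truncZetaStar_twos_le_and_sub_le s hm).1 (by positivity)

lemma hasSum_zetaStar_three_twos (s : ℕ) :
    HasSum (fun m : ℕ => ((m : ℝ) ^ 3)⁻¹ * truncZetaStar (fun _ : Fin s => 2) m)
      (zetaStar fun i : Fin (s + 1) => if (i : ℕ) = 0 then 3 else 2) := by
  set k : Fin (s + 1) → ℕ := fun i => if (i : ℕ) = 0 then 3 else 2
  have hk : ∀ N, truncZetaStar k N =
      ∑ m ∈ Icc 1 N, ((m : ℝ) ^ 3)⁻¹ * truncZetaStar (fun _ : Fin s => 2) m := by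
    intro N
    rw [truncZetaStar_succ]
    rfl
  rw [hasSum_iff_tendsto_sum_Icc_one
    (fun m => mul_nonneg (by positivity) (truncZetaStar_nonneg _ m)) (by simp)]
  refine (tendsto_truncZetaStar k (B := π ^ 2 / 3 - 2) fun N => ?_).congr hk
  rw [hk]
  exact (sum_le_sum fun m _ => inv_cube_mul_truncZetaStar_twos_le s m).trans
    (sum_le_hasSum _ (fun m _ => by positivity) hasSum_inv_cube_mul_two_mul_div)

/-- ζ*(3, {2}^∞) = 2ζ(2) − 2 = π²/3 − 2. -/
theorem stmt14 :
    Filter.Tendsto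
      (fun s : ℕ => zetaStar (fun i : Fin (s + 1) =>
        if (i : ℕ) = 0 then 3 else 2))
      Filter.atTop
      (nhds (Real.pi ^ 2 / 3 - 2)) := by
  have hlim := hasSum_inv_cube_mul_two_mul_div
  rw [← hlim.tsum_eq]
  refine (tendsto_tsum_of_dominated_convergence (𝓕 := atTop)
    (f := fun s (m : ℕ) => ((m : ℝ) ^ 3)⁻¹ * truncZetaStar (fun _ : Fin s => 2) m)
    hlim.summable (fun m => ?_) (Eventually.of_forall fun s m => ?_)).congr
    fun s => (hasSum_zetaStar_three_twos s).tsum_eq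
  · rcases Nat.eq_zero_or_pos m with rfl | hm
    · simp
    · exact (tendsto_truncZetaStar_twos hm).const_mul _
  · rw [norm_of_nonneg (mul_nonneg (by positivity) (truncZetaStar_nonneg _ m))]
    exact inv_cube_mul_truncZetaStar_twos_le s m
end
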